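/- For every unit vector ψ in ℂ³⊗ℂ³⊗ℂ³ there exist orthonormal bases {f₀⁽ᵏ⁾, f₁⁽ᵏ⁾, f₂⁽ᵏ⁾} of each of the three factors (k = 1,2,3) such that, writing |ijk⟩ = fᵢ⁽¹⁾⊗fⱼ⁽²⁾⊗fₖ⁽³⁾, all of the following overlap coefficients vanish: ⟨100|ψ⟩ = ⟨010|ψ⟩ = ⟨001|ψ⟩ = 0, ⟨200|ψ⟩ = ⟨020|ψ⟩ = ⟨002|ψ⟩ = 0, and ⟨211|ψ⟩ = ⟨121|ψ⟩ = ⟨112|ψ⟩ = 0. -/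

import Mathlib

/-!
Maximise `‖⟪a ⊗ b ⊗ c, ψ⟫‖` over unit vectors `a`, `b`, `c` (a compact set). With `b`, `c` fixed,
this overlap is `⟪a, w⟫` for the contraction `w` of `ψ` against `b̄ ⊗ c̄`, and maximality in `a` is
the equality case of Cauchy–Schwarz: `w` is parallel to `a`, so `ψ` has no overlap with `v ⊗ b ⊗ c`
for `v ⊥ a`. The same holds in the other two slots, which gives the first six zeros with
`f₀ = a`, `g₀ = b`, `h₀ = c`. Maximising again over the orthogonal complements of `a`, `b`, `c`
(where the argument runs verbatim, with `w` replaced by its projection) produces `f₁`, `g₁`, `h₁`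
and the last three zeros; `f₂`, `g₂`, `h₂` are whatever completes the bases.
-/

open scoped ComplexInnerProductSpace

/-- The product state `a ⊗ b ⊗ c` of three qutrits, as a vector in
`ℂ³ ⊗ ℂ³ ⊗ ℂ³ ≃ ℂ^(3×3×3)` with the standard inner product, so that
`⟪prod3 a b c, prod3 x y z⟫ = ⟪a,x⟫ * ⟪b,y⟫ * ⟪c,z⟫`. -/
noncomputable def prod3 (a b c : EuclideanSpace ℂ (Fin 3)) :
    EuclideanSpace ℂ (Fin 3 × Fin 3 × Fin 3) :=
  WithLp.toLp 2 (fun p => a p.1 * b p.2.1 * c p.2.2)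

open Metric Module ComplexConjugate

section

variable {𝕜 E : Type*} [RCLike 𝕜] [NormedAddCommGroup E] [InnerProductSpace 𝕜 E]

theorem Submodule.inter_sphere_nonempty {S : Submodule 𝕜 E} (hS : S ≠ ⊥) :
    ((S : Set E) ∩ sphere 0 1).Nonempty := by
  obtain ⟨x, hx, hx0⟩ := S.ne_bot_iff.1 hS
  exact ⟨(‖x‖⁻¹ : 𝕜) • x, S.smul_mem _ hx, by simp [norm_smul_inv_norm hx0]⟩

theorem Submodule.orthogonal_span_singleton_ne_bot [FiniteDimensional 𝕜 E]
    (hE : 2 ≤ finrank 𝕜 E) (v : E) : (𝕜 ∙ v)ᗮ ≠ ⊥ := by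
  intro h
  have hsum := (𝕜 ∙ v).finrank_add_finrank_orthogonal
  have hle : finrank 𝕜 (𝕜 ∙ v) ≤ 1 := (finrank_span_le_card ({v} : Set E)).trans (by simp)
  rw [h, finrank_bot] at hsum
  omega

theorem inner_eq_zero_of_isMaxOn_norm_inner {S : Submodule 𝕜 E} [S.HasOrthogonalProjection]
    {w e : E} (he : e ∈ (S : Set E) ∩ sphere 0 1)
    (hmax : IsMaxOn (fun a => ‖inner 𝕜 a w‖) ((S : Set E) ∩ sphere 0 1) e)
    {v : E} (hv : v ∈ S) (hve : inner 𝕜 v e = 0) : inner 𝕜 v w = 0 := by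
  set w' := S.starProjection w
  have hproj : ∀ a ∈ S, inner 𝕜 a w = inner 𝕜 a w' := fun a ha => by
    rw [← S.inner_starProjection_left_eq_right, S.starProjection_eq_self_iff.2 ha]
  obtain hw' | hw' := eq_or_ne w' 0
  · rw [hproj v hv, hw', inner_zero_right]
  have he1 : ‖e‖ = 1 := mem_sphere_zero_iff_norm.1 he.2
  have hcs : ‖inner 𝕜 e w'‖ = ‖e‖ * ‖w'‖ := by
    refine le_antisymm (norm_inner_le_norm _ _) ?_
    set u := (‖w'‖⁻¹ : 𝕜) • w'
    have hu : u ∈ (S : Set E) ∩ sphere 0 1 :=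
      ⟨S.smul_mem _ (S.starProjection_apply_mem w), by simp [u, norm_smul_inv_norm hw']⟩
    have huw : ‖inner 𝕜 u w'‖ = ‖w'‖ := by
      simp only [u, inner_smul_left, map_inv₀, RCLike.conj_ofReal, inner_self_eq_norm_sq_to_K,
        norm_mul, norm_inv, norm_algebraMap', norm_norm, norm_pow]
      field_simp
    calc ‖e‖ * ‖w'‖ = ‖inner 𝕜 u w'‖ := by rw [he1, one_mul, huw]
      _ = ‖inner 𝕜 u w‖ := by rw [hproj u hu.1]
      _ ≤ ‖inner 𝕜 e w‖ := isMaxOn_iff.1 hmax u hu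
      _ = ‖inner 𝕜 e w'‖ := by rw [hproj e he.1]
  obtain ⟨r, -, hr⟩ := (norm_inner_eq_norm_iff (by rintro rfl; simp at he1) hw').1 hcs
  rw [hproj v hv, hr, inner_smul_right, hve, mul_zero]

theorem exists_orthonormal_extension_pair {n : ℕ} (hn : finrank 𝕜 E = n + 2) {x y : E}
    (hx : ‖x‖ = 1) (hy : ‖y‖ = 1) (hxy : inner 𝕜 x y = 0) :
    ∃ f : Fin (n + 2) → E, Orthonormal 𝕜 f ∧ f 0 = x ∧ f 1 = y := by
  have : FiniteDimensional 𝕜 E := .of_finrank_pos (by omega)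
  let v : Fin (n + 2) → E := fun i => if i = 0 then x else y
  have hv : Orthonormal 𝕜 (({0, 1} : Set (Fin (n + 2))).domRestrict v) := by
    rw [orthonormal_iff_ite]
    rintro ⟨i, rfl | rfl⟩ ⟨j, rfl | rfl⟩ <;>
      simp [v, Set.domRestrict_apply, Subtype.ext_iff, hx, hy, hxy, inner_eq_zero_symm.1 hxy,
        inner_self_eq_norm_sq_to_K]
  obtain ⟨b, hb⟩ := hv.exists_orthonormalBasis_extension_of_card_eq (by simpa using hn)
  exact ⟨b, b.orthonormal, by simp [hb, v], by simp [hb, v]⟩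
end

local notation "ℂ³" => EuclideanSpace ℂ (Fin 3)
local notation "ℂ²⁷" => EuclideanSpace ℂ (Fin 3 × Fin 3 × Fin 3)

theorem continuous_prod3 : Continuous fun q : ℂ³ × ℂ³ × ℂ³ => prod3 q.1 q.2.1 q.2.2 := by
  unfold prod3
  fun_prop

theorem inner_prod3 (a b c : ℂ³) (ψ : ℂ²⁷) :
    ⟪prod3 a b c, ψ⟫ = ∑ i, ∑ j, ∑ k, conj (a i) * conj (b j) * conj (c k) * ψ (i, j, k) := by
  simp [prod3, PiLp.inner_apply, Fintype.sum_prod_type, mul_comm]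

noncomputable def contract₁ (ψ : ℂ²⁷) (b c : ℂ³) : ℂ³ :=
  WithLp.toLp 2 fun i => ∑ j, ∑ k, conj (b j) * conj (c k) * ψ (i, j, k)

noncomputable def contract₂ (ψ : ℂ²⁷) (a c : ℂ³) : ℂ³ :=
  WithLp.toLp 2 fun j => ∑ i, ∑ k, conj (a i) * conj (c k) * ψ (i, j, k)

noncomputable def contract₃ (ψ : ℂ²⁷) (a b : ℂ³) : ℂ³ :=
  WithLp.toLp 2 fun k => ∑ i, ∑ j, conj (a i) * conj (b j) * ψ (i, j, k)

theorem inner_contract₁ (ψ : ℂ²⁷) (a b c : ℂ³) : ⟪a, contract₁ ψ b c⟫ = ⟪prod3 a b c, ψ⟫ := by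
  rw [inner_prod3]
  simp only [contract₁, PiLp.inner_apply, RCLike.inner_apply, Finset.sum_mul]
  simp only [mul_comm, mul_left_comm]

theorem inner_contract₂ (ψ : ℂ²⁷) (a b c : ℂ³) : ⟪b, contract₂ ψ a c⟫ = ⟪prod3 a b c, ψ⟫ := by
  rw [inner_prod3, Finset.sum_comm]
  simp only [contract₂, PiLp.inner_apply, RCLike.inner_apply, Finset.sum_mul]
  simp only [mul_comm, mul_left_comm]

theorem inner_contract₃ (ψ : ℂ²⁷) (a b c : ℂ³) : ⟪c, contract₃ ψ a b⟫ = ⟪prod3 a b c, ψ⟫ := by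
  rw [inner_prod3]
  simp only [contract₃, PiLp.inner_apply, RCLike.inner_apply, Finset.sum_mul]
  rw [Finset.sum_comm]
  refine Finset.sum_congr rfl fun i _ => ?_
  rw [Finset.sum_comm]
  simp only [mul_comm, mul_left_comm]

theorem exists_unit_prod3_orthogonal_inner_eq_zero (ψ : ℂ²⁷) {S T U : Submodule ℂ ℂ³}
    (hS : S ≠ ⊥) (hT : T ≠ ⊥) (hU : U ≠ ⊥) :
    ∃ a ∈ S, ∃ b ∈ T, ∃ c ∈ U, ‖a‖ = 1 ∧ ‖b‖ = 1 ∧ ‖c‖ = 1 ∧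
      (∀ v ∈ S, ⟪v, a⟫ = 0 → ⟪prod3 v b c, ψ⟫ = 0) ∧
      (∀ v ∈ T, ⟪v, b⟫ = 0 → ⟪prod3 a v c, ψ⟫ = 0) ∧
      (∀ v ∈ U, ⟪v, c⟫ = 0 → ⟪prod3 a b v, ψ⟫ = 0) := by
  have hcpt (V : Submodule ℂ ℂ³) : IsCompact ((V : Set ℂ³) ∩ sphere 0 1) :=
    (isCompact_sphere 0 1).inter_left V.closed_of_finiteDimensional
  obtain ⟨⟨a, b, c⟩, ⟨ha, hb, hc⟩, hmax⟩ :=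
    ((hcpt S).prod ((hcpt T).prod (hcpt U))).exists_isMaxOn
      ((Submodule.inter_sphere_nonempty hS).prod ((Submodule.inter_sphere_nonempty hT).prod
        (Submodule.inter_sphere_nonempty hU)))
      (continuous_prod3.inner (𝕜 := ℂ) continuous_const).norm.continuousOn
  replace hmax := isMaxOn_iff.1 hmax
  refine ⟨a, ha.1, b, hb.1, c, hc.1, mem_sphere_zero_iff_norm.1 ha.2,
    mem_sphere_zero_iff_norm.1 hb.2, mem_sphere_zero_iff_norm.1 hc.2, ?_, ?_, ?_⟩
  · intro v hv hva
    rw [← inner_contract₁]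
    refine inner_eq_zero_of_isMaxOn_norm_inner ha (isMaxOn_iff.2 fun x hx => ?_) hv hva
    simpa only [inner_contract₁] using hmax (x, b, c) ⟨hx, hb, hc⟩
  · intro v hv hvb
    rw [← inner_contract₂]
    refine inner_eq_zero_of_isMaxOn_norm_inner hb (isMaxOn_iff.2 fun x hx => ?_) hv hvb
    simpa only [inner_contract₂] using hmax (a, x, c) ⟨ha, hx, hc⟩
  · intro v hv hvc
    rw [← inner_contract₃]
    refine inner_eq_zero_of_isMaxOn_norm_inner hc (isMaxOn_iff.2 fun x hx => ?_) hv hvc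
    simpa only [inner_contract₃] using hmax (a, b, x) ⟨ha, hb, hx⟩

theorem generalized_schmidt_three_qutrits_general
    (ψ : EuclideanSpace ℂ (Fin 3 × Fin 3 × Fin 3)) :
    ∃ f g h : Fin 3 → EuclideanSpace ℂ (Fin 3),
      Orthonormal ℂ f ∧ Orthonormal ℂ g ∧ Orthonormal ℂ h ∧
      ⟪prod3 (f 1) (g 0) (h 0), ψ⟫ = 0 ∧
      ⟪prod3 (f 0) (g 1) (h 0), ψ⟫ = 0 ∧
      ⟪prod3 (f 0) (g 0) (h 1), ψ⟫ = 0 ∧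
      ⟪prod3 (f 2) (g 0) (h 0), ψ⟫ = 0 ∧
      ⟪prod3 (f 0) (g 2) (h 0), ψ⟫ = 0 ∧
      ⟪prod3 (f 0) (g 0) (h 2), ψ⟫ = 0 ∧
      ⟪prod3 (f 2) (g 1) (h 1), ψ⟫ = 0 ∧
      ⟪prod3 (f 1) (g 2) (h 1), ψ⟫ = 0 ∧
      ⟪prod3 (f 1) (g 1) (h 2), ψ⟫ = 0 := by
  have hdim : finrank ℂ ℂ³ = 1 + 2 := by simp
  have hperp (x : ℂ³) : (ℂ ∙ x)ᗮ ≠ ⊥ :=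
    Submodule.orthogonal_span_singleton_ne_bot (by simp) x
  obtain ⟨x₀, -, y₀, -, z₀, -, hx₀, hy₀, hz₀, hA₀, hB₀, hC₀⟩ :=
    exists_unit_prod3_orthogonal_inner_eq_zero ψ (S := ⊤) (T := ⊤) (U := ⊤)
      top_ne_bot top_ne_bot top_ne_bot
  obtain ⟨x₁, hx₁₀, y₁, hy₁₀, z₁, hz₁₀, hx₁, hy₁, hz₁, hA₁, hB₁, hC₁⟩ :=
    exists_unit_prod3_orthogonal_inner_eq_zero ψ (hperp x₀) (hperp y₀) (hperp z₀)
  obtain ⟨f, hf, rfl, rfl⟩ := exists_orthonormal_extension_pair hdim hx₀ hx₁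
    (Submodule.mem_orthogonal_singleton_iff_inner_right.1 hx₁₀)
  obtain ⟨g, hg, rfl, rfl⟩ := exists_orthonormal_extension_pair hdim hy₀ hy₁
    (Submodule.mem_orthogonal_singleton_iff_inner_right.1 hy₁₀)
  obtain ⟨h, hh, rfl, rfl⟩ := exists_orthonormal_extension_pair hdim hz₀ hz₁
    (Submodule.mem_orthogonal_singleton_iff_inner_right.1 hz₁₀)
  have h₂_perp {e : Fin 3 → ℂ³} (he : Orthonormal ℂ e) : e 2 ∈ (ℂ ∙ e 0)ᗮ :=
    Submodule.mem_orthogonal_singleton_iff_inner_right.2 (he.2 (by decide))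
  exact ⟨f, g, h, hf, hg, hh,
    hA₀ _ trivial (hf.2 (by decide)), hB₀ _ trivial (hg.2 (by decide)),
    hC₀ _ trivial (hh.2 (by decide)), hA₀ _ trivial (hf.2 (by decide)),
    hB₀ _ trivial (hg.2 (by decide)), hC₀ _ trivial (hh.2 (by decide)),
    hA₁ _ (h₂_perp hf) (hf.2 (by decide)), hB₁ _ (h₂_perp hg) (hg.2 (by decide)),
    hC₁ _ (h₂_perp hh) (hh.2 (by decide))⟩

/-- **Generalized Schmidt decomposition of a three-qutrit pure state**: for every unit vector
`ψ` in `ℂ³ ⊗ ℂ³ ⊗ ℂ³` there are orthonormal bases `f, g, h` of the three factors in which the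
overlap coefficients `⟨100|ψ⟩, ⟨010|ψ⟩, ⟨001|ψ⟩, ⟨200|ψ⟩, ⟨020|ψ⟩, ⟨002|ψ⟩, ⟨211|ψ⟩, ⟨121|ψ⟩,
⟨112|ψ⟩` all vanish (writing `|ijk⟩ = fᵢ ⊗ gⱼ ⊗ hₖ`). -/
theorem generalized_schmidt_three_qutrits
    (ψ : EuclideanSpace ℂ (Fin 3 × Fin 3 × Fin 3)) (hψ : ‖ψ‖ = 1) :
    ∃ f g h : Fin 3 → EuclideanSpace ℂ (Fin 3),
      Orthonormal ℂ f ∧ Orthonormal ℂ g ∧ Orthonormal ℂ h ∧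
      ⟪prod3 (f 1) (g 0) (h 0), ψ⟫ = 0 ∧
      ⟪prod3 (f 0) (g 1) (h 0), ψ⟫ = 0 ∧
      ⟪prod3 (f 0) (g 0) (h 1), ψ⟫ = 0 ∧
      ⟪prod3 (f 2) (g 0) (h 0), ψ⟫ = 0 ∧
      ⟪prod3 (f 0) (g 2) (h 0), ψ⟫ = 0 ∧
      ⟪prod3 (f 0) (g 0) (h 2), ψ⟫ = 0 ∧
      ⟪prod3 (f 2) (g 1) (h 1), ψ⟫ = 0 ∧
      ⟪prod3 (f 1) (g 2) (h 1), ψ⟫ = 0 ∧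
      ⟪prod3 (f 1) (g 1) (h 2), ψ⟫ = 0 :=
  generalized_schmidt_three_qutrits_general ψ
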